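/- If A ⊂_p B (sup A ≤ sup B), then every element of A belongs to the Torra intersection A ∩ B, and consequently either A ⊂_s (A ∩ B) or A ⊂_t (A ∩ B) holds. -/

import Mathlib

/-! Since `sup A ≤ sup B`, the filter defining `A ∩ B` keeps every element of `A`, so `A` is a
submultiset of `A ∩ B`. Sorting descendingly turns a submultiset into a sublist, and the `i`-th
entry of a sublist of a descending list is at most the `i`-th entry of the list itself. -/

/-- Supremum (maximum) of a multiset of reals in `[0,1]`, defaulting to `0`. -/
noncomputable def msup (A : Multiset ℝ) : ℝ := A.toList.foldr max 0

/-- Infimum (minimum) of a multiset of reals in `[0,1]`, defaulting to `1`. -/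
noncomputable def minf (A : Multiset ℝ) : ℝ := A.toList.foldr min 1

/-- Mean of a multiset of reals. -/
noncomputable def mmean (A : Multiset ℝ) : ℝ := A.sum / A.card

/-- The elements of a multiset sorted in descending order. -/
noncomputable def dsort (A : Multiset ℝ) : List ℝ := (A.sort (· ≤ ·)).reverse

/-- `A ⊂ₛ B`: `|A| ≥ |B|` and the `i`-th largest element of `B` is at least the
`i`-th largest element of `A`, for `i ≤ |B|`. -/
noncomputable def subS (A B : Multiset ℝ) : Prop :=
  B.card ≤ A.card ∧ ∀ i < B.card, (dsort A).getD i 0 ≤ (dsort B).getD i 0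

/-- `A ⊂ₜ B`: `|A| < |B|` and the `i`-th largest element of `B` is at least the
`i`-th largest element of `A`, for `i ≤ |A|`. -/
noncomputable def subT (A B : Multiset ℝ) : Prop :=
  A.card < B.card ∧ ∀ i < A.card, (dsort A).getD i 0 ≤ (dsort B).getD i 0

/-- Torra intersection of two hesitant fuzzy elements (as multisets). -/
noncomputable def tInter (A B : Multiset ℝ) : Multiset ℝ :=
  (A + B).filter (fun h => h ≤ min (msup A) (msup B))

/-- Torra union of two hesitant fuzzy elements (as multisets). -/
noncomputable def tUnion (A B : Multiset ℝ) : Multiset ℝ :=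
  (A + B).filter (fun h => max (minf A) (minf B) ≤ h)

namespace List

variable {α : Type*} [LinearOrder α]

theorem SortedGE.getElem_le_getElem_of_sublist {l l' : List α} (hs : l <+ l') (hl' : l'.SortedGE)
    {i : ℕ} (hi : i < l.length) : l[i] ≤ l'[i]'(hi.trans_le hs.length_le) := by
  induction hs generalizing i with
  | slnil => simp at hi
  | @cons l₁ l₂ a hs ih =>
    have hi₂ : i < l₂.length := hi.trans_le hs.length_le
    calc l₁[i] ≤ l₂[i] := ih hl'.pairwise.of_cons.sortedGE hi
      _ = (a :: l₂)[i + 1]'(Nat.succ_lt_succ hi₂) := rfl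
      _ ≤ (a :: l₂)[i]'(Nat.lt_succ_of_lt hi₂) := hl'.getElem_ge_getElem_of_le (Nat.le_succ i)
  | @cons_cons l₁ l₂ a hs ih =>
    cases i with
    | zero => exact le_rfl
    | succ i => exact ih hl'.pairwise.of_cons.sortedGE (Nat.lt_of_succ_lt_succ hi)

end List

theorem le_msup {A : Multiset ℝ} {a : ℝ} (ha : a ∈ A) : a ≤ msup A :=
  List.le_max_of_le' 0 (Multiset.mem_toList.2 ha) le_rfl

theorem le_tInter_of_msup_le {A B : Multiset ℝ} (hp : msup A ≤ msup B) : A ≤ tInter A B := by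
  have hA : A.filter (· ≤ min (msup A) (msup B)) = A :=
    Multiset.filter_eq_self.2 fun a ha => (le_msup ha).trans_eq (min_eq_left hp).symm
  calc A = A.filter (· ≤ min (msup A) (msup B)) := hA.symm
    _ ≤ tInter A B := by
      rw [tInter, Multiset.filter_add]
      exact Multiset.le_add_right _ _

theorem length_dsort (A : Multiset ℝ) : (dsort A).length = A.card := by
  simp [dsort]

theorem sortedGE_dsort (A : Multiset ℝ) : (dsort A).SortedGE :=
  List.SortedLE.reverse (Multiset.pairwise_sort A (· ≤ ·)).sortedLE

theorem dsort_sublist_dsort {A C : Multiset ℝ} (h : A ≤ C) : (dsort A).Sublist (dsort C) := by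
  have hsub : (A.sort (· ≤ ·)).Subperm (C.sort (· ≤ ·)) := by
    rwa [← Multiset.coe_le, Multiset.sort_eq, Multiset.sort_eq]
  exact (List.sublist_of_subperm_of_pairwise hsub (Multiset.pairwise_sort _ _)
    (Multiset.pairwise_sort _ _)).reverse

theorem getD_dsort_le_of_le {A C : Multiset ℝ} (h : A ≤ C) {i : ℕ} (hi : i < A.card) :
    (dsort A).getD i 0 ≤ (dsort C).getD i 0 := by
  have hiA : i < (dsort A).length := (length_dsort A).symm ▸ hi
  have hs := dsort_sublist_dsort h
  rw [List.getD_eq_getElem _ _ hiA, List.getD_eq_getElem _ _ (hiA.trans_le hs.length_le)]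
  exact (sortedGE_dsort C).getElem_le_getElem_of_sublist hs hiA

theorem subS_or_subT_of_le {A C : Multiset ℝ} (h : A ≤ C) : subS A C ∨ subT A C := by
  rcases (Multiset.card_le_card h).lt_or_eq with hlt | heq
  · exact Or.inr ⟨hlt, fun i hi => getD_dsort_le_of_le h hi⟩
  · exact Or.inl ⟨heq.ge, fun i hi => getD_dsort_le_of_le h (heq ▸ hi)⟩

theorem stmt10_general (A B : Multiset ℝ)
    (hp : msup A ≤ msup B) :
    (∀ a ∈ A, a ∈ tInter A B) ∧ (subS A (tInter A B) ∨ subT A (tInter A B)) := by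
  have hle := le_tInter_of_msup_le hp
  exact ⟨fun a ha => Multiset.mem_of_le hle ha, subS_or_subT_of_le hle⟩

theorem stmt10 (A B : Multiset ℝ) (hA : A ≠ 0) (hB : B ≠ 0)
    (hA1 : ∀ x ∈ A, x ∈ Set.Icc (0:ℝ) 1) (hB1 : ∀ x ∈ B, x ∈ Set.Icc (0:ℝ) 1)
    (hp : msup A ≤ msup B) :
    (∀ a ∈ A, a ∈ tInter A B) ∧ (subS A (tInter A B) ∨ subT A (tInter A B)) :=
  stmt10_general A B hp
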